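/- Let p ∈ [1,∞), define τ by 1/τ = 1/p + 1/2, let A > 0, and let f ∈ C¹([0,1]²). For N ≥ 1 let σ_N^A(f)_p := inf over all partitions 𝒯 of [0,1]² into at most N axis-aligned rectangles, each of diameter at most A N^{−1/2}, of the global error e_{1,𝒯}(f)_p = (Σ_{T∈𝒯} e_{1,T}(f)_p^p)^{1/p}. Then liminf_{N→∞} N^{1/2} σ_N^A(f)_p ≥ ‖K_p(∇f)‖_{L^τ([0,1]²)}, where K_p(∇f)(z) := inf over axis-aligned rectangles T of unit area of e_{1,T}(𝐪_z)_p with 𝐪_z(x,y) = ∂_x f(z)·x + ∂_y f(z)·y. -/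

import Mathlib

/-!
Rescaling a rectangle `T` to unit area shows that for linear `𝐪` the error `e_{1,T}(𝐪)_p` is at
least `|T|^{1/p + 1/2} K_p(𝐪) = |T|^{1/τ} K_p(𝐪)`. On a rectangle of small diameter, `f` differs
from an affine function with gradient `∇f(z)`, `z ∈ T`, by at most `ε diam T`, so
`|T|^{1/τ} K_p(∇f(z)) ≤ e_{1,T}(f)_p + |T|^{1/p} ε diam T`. Integrating `K_p(∇f)^τ` cell by cell,
Hölder's inequality over the at most `N` cells (`1/τ - 1/p = 1/2`) and then Minkowski's give
`‖K_p(∇f)‖_{L^τ} ≤ N^{1/2} (e_{1,𝒯}(f)_p + ε A N^{-1/2})`, because the areas add up to `1`.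
Let `N → ∞`, then `ε → 0`.
-/

open Set MeasureTheory ENNReal

def rect (a b w h : ℝ) : Set (ℝ × ℝ) := Set.Icc a (a + w) ×ˢ Set.Icc b (b + h)

/-- `e_{1,T}(g)_p`. -/
noncomputable def constErr (p : ℝ≥0∞) (g : ℝ × ℝ → ℝ) (T : Set (ℝ × ℝ)) : ℝ≥0∞ :=
  ⨅ c : ℝ, eLpNorm (fun z => g z - c) p (volume.restrict T)

/-- The shape function `K_p(𝐪)` of `𝐪(x,y) = q_x x + q_y y`. -/
noncomputable def shapeK (p : ℝ≥0∞) (qx qy : ℝ) : ℝ≥0∞ :=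
  sInf { e : ℝ≥0∞ | ∃ a b w h : ℝ, 0 < w ∧ 0 < h ∧ w * h = 1 ∧
    e = constErr p (fun z => qx * z.1 + qy * z.2) (rect a b w h) }

def unitSq : Set (ℝ × ℝ) := Set.Icc (0:ℝ) 1 ×ˢ Set.Icc (0:ℝ) 1

/-- The global error `e_{1,𝒯}(f)_p`, from the local errors `e i = e_{1,T_i}(f)_p`. -/
noncomputable def globErrP (p : ℝ≥0∞) {ι : Type*} [Fintype ι] (e : ι → ℝ≥0∞) : ℝ≥0∞ :=
  if p = ⊤ then ⨆ i, e i else (∑ i, e i ^ p.toReal) ^ (1 / p.toReal)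

/-- `σ_N^A(f)_p`. -/
noncomputable def rectSigmaA (p : ℝ≥0∞) (A : ℝ) (f : ℝ × ℝ → ℝ) (N : ℕ) : ℝ≥0∞ :=
  sInf { e : ℝ≥0∞ | ∃ M : ℕ, 1 ≤ M ∧ M ≤ N ∧ ∃ a b w h : Fin M → ℝ,
    (∀ i, 0 < w i ∧ 0 < h i) ∧
    (∀ i, Metric.diam (rect (a i) (b i) (w i) (h i)) ≤ A * (N : ℝ) ^ (-(1:ℝ) / 2)) ∧
    (∀ i i', i ≠ i' →
      Disjoint (interior (rect (a i) (b i) (w i) (h i)))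
        (interior (rect (a i') (b i') (w i') (h i')))) ∧
    (⋃ i, rect (a i) (b i) (w i) (h i)) = unitSq ∧
    e = globErrP p fun i => constErr p f (rect (a i) (b i) (w i) (h i)) }

open Filter Topology Pointwise

theorem isCompact_rect (a b w h : ℝ) : IsCompact (rect a b w h) :=
  isCompact_Icc.prod isCompact_Icc

theorem convex_rect (a b w h : ℝ) : Convex ℝ (rect a b w h) :=
  (convex_Icc _ _).prod (convex_Icc _ _)

theorem measurableSet_rect (a b w h : ℝ) : MeasurableSet (rect a b w h) :=
  measurableSet_Icc.prod measurableSet_Icc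

theorem volume_rect (a b w h : ℝ) :
    volume (rect a b w h) = ENNReal.ofReal w * ENNReal.ofReal h := by
  rw [rect, Measure.volume_eq_prod, Measure.prod_prod, Real.volume_Icc, Real.volume_Icc,
    add_sub_cancel_left, add_sub_cancel_left]

theorem smul_rect {r : ℝ} (hr : 0 < r) (a b w h : ℝ) :
    r • rect a b w h = rect (r * a) (r * b) (r * w) (r * h) := by
  simp only [rect, Set.smul_set_prod, LinearOrderedField.smul_Icc hr, mul_add]

theorem unitSq_eq_rect : unitSq = rect 0 0 1 1 := by
  simp [unitSq, rect]

theorem volume_unitSq : volume unitSq = 1 := by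
  simp [unitSq_eq_rect, volume_rect]

theorem isCompact_unitSq : IsCompact unitSq :=
  isCompact_Icc.prod isCompact_Icc

theorem convex_unitSq : Convex ℝ unitSq :=
  (convex_Icc _ _).prod (convex_Icc _ _)

theorem uniqueDiffOn_unitSq : UniqueDiffOn ℝ unitSq :=
  (uniqueDiffOn_Icc zero_lt_one).prod (uniqueDiffOn_Icc zero_lt_one)

theorem ContinuousLinearMap.apply_eq_fst_add_snd (L : ℝ × ℝ →L[ℝ] ℝ) (y : ℝ × ℝ) :
    L y = L (1, 0) * y.1 + L (0, 1) * y.2 := by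
  conv_lhs => rw [show y = y.1 • ((1 : ℝ), (0 : ℝ)) + y.2 • ((0 : ℝ), (1 : ℝ)) by ext <;> simp]
  rw [map_add, map_smul, map_smul, smul_eq_mul, smul_eq_mul, mul_comm, mul_comm y.2]

theorem eLpNorm_restrict_smul_set {E F : Type*} [NormedAddCommGroup E] [NormedSpace ℝ E]
    [MeasurableSpace E] [BorelSpace E] [FiniteDimensional ℝ E] [NormedAddCommGroup F]
    (μ : Measure E) [μ.IsAddHaarMeasure] {p : ℝ≥0∞} (hp : p ≠ ⊤) {r : ℝ} (hr : r ≠ 0)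
    (s : Set E) (g : E → F) :
    eLpNorm g p (μ.restrict (r • s)) =
      ENNReal.ofReal |r ^ Module.finrank ℝ E| ^ (1 / p).toReal *
        eLpNorm (fun y => g (r • y)) p (μ.restrict s) := by
  let e : E ≃ᵐ E := (Homeomorph.smulOfNeZero r hr).toMeasurableEquiv
  have hpre : e ⁻¹' (r • s) = s := by
    ext y; simp [e, Set.smul_mem_smul_set_iff₀ hr]
  have hmap : μ.map e = ENNReal.ofReal |r ^ Module.finrank ℝ E|⁻¹ • μ := by
    rw [← abs_inv]; exact Measure.map_addHaar_smul μ hr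
  have hc : ENNReal.ofReal |r ^ Module.finrank ℝ E| * ENNReal.ofReal |r ^ Module.finrank ℝ E|⁻¹
      = 1 := by
    rw [← ENNReal.ofReal_mul (abs_nonneg _), mul_inv_cancel₀ (by positivity), ENNReal.ofReal_one]
  have hrestrict : μ.restrict (r • s) =
      ENNReal.ofReal |r ^ Module.finrank ℝ E| • (μ.restrict s).map e := by
    conv_rhs => rw [← hpre]
    rw [← e.restrict_map, hmap, Measure.restrict_smul, smul_smul, hc, one_smul]
  rw [hrestrict, eLpNorm_smul_measure_of_ne_top hp, smul_eq_mul]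
  congr 1
  exact e.measurableEmbedding.eLpNorm_map_measure

theorem Convex.ae_fderivWithin_eq_fderiv {E F : Type*} [NormedAddCommGroup E] [NormedSpace ℝ E]
    [MeasurableSpace E] [BorelSpace E] [FiniteDimensional ℝ E] [NormedAddCommGroup F]
    [NormedSpace ℝ F] (μ : Measure E) [μ.IsAddHaarMeasure] {s : Set E} (hs : Convex ℝ s)
    (f : E → F) : ∀ᵐ z ∂μ, z ∈ s → fderivWithin ℝ f s z = fderiv ℝ f z := by
  filter_upwards [measure_eq_zero_iff_ae_notMem.1 (hs.addHaar_frontier μ)] with z hz hzs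
  have hint : z ∈ interior s := by
    by_contra h
    exact hz ⟨subset_closure hzs, h⟩
  exact fderivWithin_of_mem_nhds (mem_interior_iff_mem_nhds.1 hint)

theorem sum_measure_le_measure_iUnion_of_disjoint_interior {E : Type*} [NormedAddCommGroup E]
    [NormedSpace ℝ E] [MeasurableSpace E] [BorelSpace E] [FiniteDimensional ℝ E]
    (μ : Measure E) [μ.IsAddHaarMeasure] {ι : Type*} [Fintype ι] {T : ι → Set E}
    (hT : ∀ i, Convex ℝ (T i))
    (hdisj : ∀ i j, i ≠ j → Disjoint (interior (T i)) (interior (T j))) :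
    ∑ i, μ (T i) ≤ μ (⋃ i, T i) :=
  calc ∑ i, μ (T i) = ∑ i, μ (interior (T i)) := by
        simp only [measure_interior_of_null_frontier ((hT _).addHaar_frontier μ)]
    _ = μ (⋃ i, interior (T i)) := by
        rw [← measure_biUnion_finset (fun i _ j _ hij => hdisj i j hij)
          (fun i _ => isOpen_interior.measurableSet)]
        simp
    _ ≤ μ (⋃ i, T i) := measure_mono (iUnion_mono fun _ => interior_subset)

theorem setLIntegral_rpow_le_of_ae_le {α : Type*} [MeasurableSpace α] {μ : Measure α}
    {s : Set α} {g : α → ℝ≥0∞} {c : ℝ≥0∞} {τ : ℝ} (hτ : 0 < τ) (hs₀ : μ s ≠ 0) (hs : μ s ≠ ⊤)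
    (h : ∀ᵐ x ∂μ.restrict s, μ s ^ (1 / τ) * g x ≤ c) :
    ∫⁻ x in s, g x ^ τ ∂μ ≤ c ^ τ := by
  have hpt : ∀ᵐ x ∂μ.restrict s, g x ^ τ ≤ c ^ τ / μ s := h.mono fun x hx => by
    rw [ENNReal.le_div_iff_mul_le (Or.inl hs₀) (Or.inl hs)]
    calc g x ^ τ * μ s = (μ s ^ (1 / τ) * g x) ^ τ := by
          rw [ENNReal.mul_rpow_of_nonneg _ _ hτ.le, ← ENNReal.rpow_mul, one_div_mul_cancel hτ.ne',
            ENNReal.rpow_one, mul_comm]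
      _ ≤ c ^ τ := by gcongr
  calc ∫⁻ x in s, g x ^ τ ∂μ ≤ ∫⁻ _ in s, c ^ τ / μ s ∂μ := lintegral_mono_ae hpt
    _ = c ^ τ := by rw [setLIntegral_const, ENNReal.div_mul_cancel hs₀ hs]

theorem ofReal_integral_toReal_rpow_rpow_le {α : Type*} [MeasurableSpace α] (μ : Measure α)
    (g : α → ℝ≥0∞) {τ : ℝ} (hτ : 0 < τ) :
    ENNReal.ofReal ((∫ x, (g x).toReal ^ τ ∂μ) ^ (1 / τ)) ≤ (∫⁻ x, g x ^ τ ∂μ) ^ (1 / τ) := by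
  rw [← ENNReal.ofReal_rpow_of_nonneg (integral_nonneg fun x => by positivity) (by positivity)]
  gcongr
  calc ENNReal.ofReal (∫ x, (g x).toReal ^ τ ∂μ) ≤ ‖∫ x, (g x).toReal ^ τ ∂μ‖ₑ :=
        Real.ofReal_le_enorm _
    _ ≤ ∫⁻ x, ‖(g x).toReal ^ τ‖ₑ ∂μ := enorm_integral_le_lintegral_enorm _
    _ ≤ ∫⁻ x, g x ^ τ ∂μ := lintegral_mono fun x => by
        rw [Real.enorm_of_nonneg (by positivity),
          ← ENNReal.ofReal_rpow_of_nonneg ENNReal.toReal_nonneg hτ.le]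
        gcongr
        exact ENNReal.ofReal_toReal_le

theorem IsCompact.exists_pos_norm_sub_sub_fderivWithin_le {E F : Type*} [NormedAddCommGroup E]
    [NormedSpace ℝ E] [NormedAddCommGroup F] [NormedSpace ℝ F] {K : Set E} (hK : IsCompact K)
    (hKu : UniqueDiffOn ℝ K) {f : E → F} (hf : ContDiffOn ℝ 1 f K) {ε : ℝ} (hε : 0 < ε) :
    ∃ δ > 0, ∀ x ∈ K, ∀ y, segment ℝ x y ⊆ K → dist x y ≤ δ →
      ‖f y - f x - fderivWithin ℝ f K x (y - x)‖ ≤ ε * ‖y - x‖ := by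
  have hD := hf.continuousOn_fderivWithin hKu le_rfl
  obtain ⟨δ, hδ, hD_uc⟩ :=
    Metric.uniformContinuousOn_iff.1 (hK.uniformContinuousOn_of_continuous hD) ε hε
  refine ⟨δ / 2, half_pos hδ, fun x hx y hseg hxy => ?_⟩
  have hderiv : ∀ u ∈ segment ℝ x y,
      HasFDerivWithinAt f (fderivWithin ℝ f K u) (segment ℝ x y) u := fun u hu =>
    ((hf.differentiableOn one_ne_zero u (hseg hu)).hasFDerivWithinAt).mono hseg
  have hbound : ∀ u ∈ segment ℝ x y, ‖fderivWithin ℝ f K u - fderivWithin ℝ f K x‖ ≤ ε := by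
    intro u hu
    have hux : dist u x < δ := by
      have := segment_subset_closedBall_left x y hu
      rw [Metric.mem_closedBall] at this
      linarith
    rw [← dist_eq_norm]
    exact (hD_uc u (hseg hu) x hx hux).le
  exact (convex_segment x y).norm_image_sub_le_of_norm_hasFDerivWithin_le' hderiv hbound
    (left_mem_segment ℝ x y) (right_mem_segment ℝ x y)

open Finset in
theorem ENNReal.rpow_sum_rpow_le_card_rpow_mul {ι : Type*} (s : Finset ι) (x : ι → ℝ≥0∞)
    {q r : ℝ} (hq : 0 < q) (hqr : q ≤ r) :
    (∑ i ∈ s, x i ^ q) ^ (1 / q) ≤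
      (#s : ℝ≥0∞) ^ (1 / q - 1 / r) * (∑ i ∈ s, x i ^ r) ^ (1 / r) := by
  have hr : 0 < r := hq.trans_le hqr
  have h := ENNReal.rpow_sum_le_const_mul_sum_rpow s (fun i => x i ^ q)
    ((one_le_div hq).2 hqr)
  simp only [← ENNReal.rpow_mul, mul_div_cancel₀ r hq.ne'] at h
  calc (∑ i ∈ s, x i ^ q) ^ (1 / q) = ((∑ i ∈ s, x i ^ q) ^ (r / q)) ^ (1 / r) := by
        rw [← ENNReal.rpow_mul]; field_simp
    _ ≤ ((#s : ℝ≥0∞) ^ (r / q - 1) * ∑ i ∈ s, x i ^ r) ^ (1 / r) := by gcongr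
    _ = (#s : ℝ≥0∞) ^ (1 / q - 1 / r) * (∑ i ∈ s, x i ^ r) ^ (1 / r) := by
        rw [ENNReal.mul_rpow_of_nonneg _ _ (by positivity), ← ENNReal.rpow_mul]
        congr 2
        field_simp

open Finset in
theorem ENNReal.rpow_sum_rpow_add_mul_le {ι : Type*} (s : Finset ι) (e v : ι → ℝ≥0∞)
    (hv : ∑ i ∈ s, v i ≤ 1) {P τ : ℝ} (hP : 1 ≤ P) (hτ : 1 / τ = 1 / P + 1 / 2) (B : ℝ≥0∞) :
    (∑ i ∈ s, (e i + v i ^ (1 / P) * B) ^ τ) ^ (1 / τ) ≤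
      (#s : ℝ≥0∞) ^ (1 / 2 : ℝ) * ((∑ i ∈ s, e i ^ P) ^ (1 / P) + B) := by
  have hP₀ : 0 < P := zero_lt_one.trans_le hP
  have hτ₀ : 0 < τ := one_div_pos.1 (by rw [hτ]; positivity)
  have hτP : τ ≤ P := by
    rw [← one_div_le_one_div hP₀ hτ₀, hτ]; linarith
  have hB : (∑ i ∈ s, (v i ^ (1 / P) * B) ^ P) ^ (1 / P) ≤ B := by
    simp only [ENNReal.mul_rpow_of_nonneg _ _ hP₀.le, ← ENNReal.rpow_mul,
      one_div_mul_cancel hP₀.ne', ENNReal.rpow_one, ← Finset.sum_mul]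
    calc ((∑ i ∈ s, v i) * B ^ P) ^ (1 / P) ≤ (B ^ P) ^ (1 / P) := by
          gcongr; exact mul_le_of_le_one_left' hv
      _ = B := by rw [← ENNReal.rpow_mul, mul_one_div_cancel hP₀.ne', ENNReal.rpow_one]
  calc (∑ i ∈ s, (e i + v i ^ (1 / P) * B) ^ τ) ^ (1 / τ)
      ≤ (#s : ℝ≥0∞) ^ (1 / τ - 1 / P) * (∑ i ∈ s, (e i + v i ^ (1 / P) * B) ^ P) ^ (1 / P) :=
        ENNReal.rpow_sum_rpow_le_card_rpow_mul s _ hτ₀ hτP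
    _ ≤ (#s : ℝ≥0∞) ^ (1 / 2 : ℝ) * ((∑ i ∈ s, e i ^ P) ^ (1 / P) + B) := by
        rw [hτ, add_sub_cancel_left]
        gcongr
        exact (ENNReal.Lp_add_le s e _ hP).trans (by gcongr)

theorem ENNReal.le_mul_sInf_add {S : Set ℝ≥0∞} {x k c : ℝ≥0∞} (hk₀ : k ≠ 0) (hk : k ≠ ⊤)
    (h : ∀ g ∈ S, x ≤ k * g + c) : x ≤ k * sInf S + c := by
  rw [← tsub_le_iff_right, mul_comm, ← ENNReal.div_le_iff hk₀ hk]
  refine le_sInf fun g hg => (ENNReal.div_le_iff hk₀ hk).2 ?_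
  rw [mul_comm, tsub_le_iff_right]
  exact h g hg

theorem constErr_smul_set {p : ℝ≥0∞} (hp : p ≠ ⊤) {r : ℝ} (hr : r ≠ 0) (g : ℝ × ℝ → ℝ)
    (S : Set (ℝ × ℝ)) :
    constErr p g (r • S) =
      ENNReal.ofReal (r ^ 2) ^ (1 / p).toReal * constErr p (fun y => g (r • y)) S := by
  have hdim : |r ^ Module.finrank ℝ (ℝ × ℝ)| = r ^ 2 := by simp [sq_abs]
  have hc0 : ENNReal.ofReal (r ^ 2) ^ (1 / p).toReal ≠ 0 := by
    simp [ENNReal.rpow_eq_zero_iff, hr]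
  have hctop : ENNReal.ofReal (r ^ 2) ^ (1 / p).toReal ≠ ⊤ := by
    simp [ENNReal.rpow_eq_top_iff]
  simp only [constErr, ENNReal.mul_iInf_of_ne hc0 hctop,
    eLpNorm_restrict_smul_set volume hp hr S, hdim]

theorem constErr_const_mul (p : ℝ≥0∞) {r : ℝ} (hr : r ≠ 0) (g : ℝ × ℝ → ℝ) (S : Set (ℝ × ℝ)) :
    constErr p (fun y => r * g y) S = ‖r‖ₑ * constErr p g S := by
  have hsmul : ∀ c, (fun y => r * g y - r * c) = r • fun y => g y - c := fun c => by
    ext y; simp [mul_sub]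
  rw [constErr, constErr, ENNReal.mul_iInf_of_ne (by simpa using hr) enorm_ne_top,
    ← (Equiv.mulLeft₀ r hr).iInf_comp]
  simp only [Equiv.mulLeft₀_apply, hsmul, eLpNorm_const_smul]

theorem constErr_le_constErr_add {p : ℝ≥0∞} (hp : 1 ≤ p) {g₁ g₂ : ℝ × ℝ → ℝ} {S : Set (ℝ × ℝ)}
    (hS : MeasurableSet S) (hg₁ : AEStronglyMeasurable g₁ (volume.restrict S))
    (hg₂ : AEStronglyMeasurable g₂ (volume.restrict S)) (c₀ : ℝ) {B : ℝ}
    (hB : ∀ y ∈ S, ‖g₁ y - g₂ y - c₀‖ ≤ B) :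
    constErr p g₁ S ≤ constErr p g₂ S + volume S ^ (1 / p.toReal) * ENNReal.ofReal B := by
  have hdiff : eLpNorm (fun y => g₁ y - g₂ y - c₀) p (volume.restrict S) ≤
      volume S ^ (1 / p.toReal) * ENNReal.ofReal B := by
    simpa [Measure.restrict_apply_univ] using
      eLpNorm_le_of_ae_bound (p := p) ((ae_restrict_mem hS).mono hB)
  rw [constErr, constErr, ENNReal.iInf_add]
  refine le_iInf fun c => (iInf_le _ (c + c₀)).trans ?_
  calc eLpNorm (fun y => g₁ y - (c + c₀)) p (volume.restrict S)
      = eLpNorm ((fun y => g₂ y - c) + fun y => g₁ y - g₂ y - c₀) p (volume.restrict S) := by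
        congr 1; ext y; simp only [Pi.add_apply]; ring
    _ ≤ _ := (eLpNorm_add_le (hg₂.sub aestronglyMeasurable_const)
        ((hg₁.sub hg₂).sub aestronglyMeasurable_const) hp).trans (add_le_add le_rfl hdiff)

theorem area_rpow_mul_shapeK_le_constErr {p : ℝ≥0∞} (hp : p ≠ ⊤) (qx qy a b : ℝ) {w h : ℝ}
    (hw : 0 < w) (hh : 0 < h) :
    ENNReal.ofReal (w * h) ^ (1 / p.toReal + 1 / 2) * shapeK p qx qy ≤
      constErr p (fun z => qx * z.1 + qy * z.2) (rect a b w h) := by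
  set r := √(w * h) with hr_def
  have hr : 0 < r := Real.sqrt_pos.2 (mul_pos hw hh)
  have hr2 : r ^ 2 = w * h := Real.sq_sqrt (mul_pos hw hh).le
  have hrect : rect a b w h = r • rect (a / r) (b / r) (w / r) (h / r) := by
    rw [smul_rect hr]; field_simp
  have hK : shapeK p qx qy ≤
      constErr p (fun z => qx * z.1 + qy * z.2) (rect (a / r) (b / r) (w / r) (h / r)) :=
    sInf_le ⟨a / r, b / r, w / r, h / r, by positivity, by positivity,
      by rw [div_mul_div_comm, ← sq, hr2, div_self (mul_pos hw hh).ne'], rfl⟩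
  have hhom : (fun y : ℝ × ℝ => qx * (r • y).1 + qy * (r • y).2) =
      fun y => r * (qx * y.1 + qy * y.2) := by
    ext y; simp only [Prod.smul_fst, Prod.smul_snd, smul_eq_mul]; ring
  have hfactor : ENNReal.ofReal (r ^ 2) ^ (1 / p).toReal * ‖r‖ₑ =
      ENNReal.ofReal (w * h) ^ (1 / p.toReal + 1 / 2) := by
    rw [ENNReal.rpow_add _ _ (by simpa using mul_pos hw hh) ENNReal.ofReal_ne_top, hr2,
      ENNReal.toReal_div, ENNReal.toReal_one, Real.enorm_of_nonneg hr.le, hr_def, Real.sqrt_eq_rpow,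
      ENNReal.ofReal_rpow_of_nonneg (mul_pos hw hh).le (by norm_num : (0 : ℝ) ≤ 1 / 2)]
  rw [hrect, constErr_smul_set hp hr.ne', hhom, constErr_const_mul p hr.ne', ← mul_assoc,
    hfactor]
  gcongr

theorem exists_pos_area_rpow_mul_shapeK_le {p : ℝ≥0∞} (hp : 1 ≤ p) (hptop : p ≠ ⊤)
    {f : ℝ × ℝ → ℝ} (hf : ContDiffOn ℝ 1 f unitSq) {ε : ℝ} (hε : 0 < ε) :
    ∃ δ > 0, ∀ a b w h : ℝ, 0 < w → 0 < h → rect a b w h ⊆ unitSq →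
      Metric.diam (rect a b w h) ≤ δ → ∀ z ∈ rect a b w h,
      ENNReal.ofReal (w * h) ^ (1 / p.toReal + 1 / 2) *
          shapeK p (fderivWithin ℝ f unitSq z (1, 0)) (fderivWithin ℝ f unitSq z (0, 1)) ≤
        constErr p f (rect a b w h) +
          volume (rect a b w h) ^ (1 / p.toReal) *
            ENNReal.ofReal (ε * Metric.diam (rect a b w h)) := by
  obtain ⟨δ, hδ, hlin⟩ :=
    isCompact_unitSq.exists_pos_norm_sub_sub_fderivWithin_le uniqueDiffOn_unitSq hf hε
  refine ⟨δ, hδ, fun a b w h hw hh hT hdiam z hz => ?_⟩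
  set L := fderivWithin ℝ f unitSq z
  have hbdd := (isCompact_rect a b w h).isBounded
  have hbound : ∀ y ∈ rect a b w h,
      ‖L y - f y - (L z - f z)‖ ≤ ε * Metric.diam (rect a b w h) := by
    intro y hy
    have hzy := Metric.dist_le_diam_of_mem hbdd hz hy
    calc ‖L y - f y - (L z - f z)‖ = ‖f y - f z - L (y - z)‖ := by
          rw [← norm_neg, map_sub]; ring_nf
      _ ≤ ε * ‖y - z‖ :=
          hlin z (hT hz) y (((convex_rect a b w h).segment_subset hz hy).trans hT)
            (hzy.trans hdiam)
      _ ≤ ε * Metric.diam (rect a b w h) := by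
          rw [← dist_eq_norm, dist_comm]; gcongr
  calc ENNReal.ofReal (w * h) ^ (1 / p.toReal + 1 / 2) * shapeK p (L (1, 0)) (L (0, 1))
      ≤ constErr p (fun y => L (1, 0) * y.1 + L (0, 1) * y.2) (rect a b w h) :=
        area_rpow_mul_shapeK_le_constErr hptop _ _ a b hw hh
    _ = constErr p L (rect a b w h) := by
        simp only [← L.apply_eq_fst_add_snd]
    _ ≤ _ := constErr_le_constErr_add hp (measurableSet_rect a b w h)
        L.continuous.aestronglyMeasurable
        ((hf.continuousOn.mono hT).aestronglyMeasurable (measurableSet_rect a b w h)) _ hbound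

theorem exists_pos_setLIntegral_shapeK_rpow_le {p : ℝ≥0∞} (hp : 1 ≤ p) (hptop : p ≠ ⊤) {τ : ℝ}
    (hτ : 1 / τ = 1 / p.toReal + 1 / 2) {f : ℝ × ℝ → ℝ} (hf : ContDiffOn ℝ 1 f unitSq)
    {ε : ℝ} (hε : 0 < ε) :
    ∃ δ > 0, ∀ a b w h : ℝ, 0 < w → 0 < h → rect a b w h ⊆ unitSq → ∀ d ≤ δ,
      Metric.diam (rect a b w h) ≤ d →
      ∫⁻ z in rect a b w h, shapeK p (fderiv ℝ f z (1, 0)) (fderiv ℝ f z (0, 1)) ^ τ ≤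
        (constErr p f (rect a b w h) +
          volume (rect a b w h) ^ (1 / p.toReal) * ENNReal.ofReal (ε * d)) ^ τ := by
  have hτ₀ : 0 < τ := one_div_pos.1 (by rw [hτ]; positivity)
  obtain ⟨δ, hδ, hshape⟩ := exists_pos_area_rpow_mul_shapeK_le hp hptop hf hε
  refine ⟨δ, hδ, fun a b w h hw hh hT d hdδ hdiam => ?_⟩
  have hvol : volume (rect a b w h) = ENNReal.ofReal (w * h) := by
    rw [volume_rect, ENNReal.ofReal_mul hw.le]
  refine setLIntegral_rpow_le_of_ae_le hτ₀ (by simp [hvol, mul_pos hw hh])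
    (hvol ▸ ENNReal.ofReal_ne_top) ?_
  filter_upwards [ae_restrict_mem (measurableSet_rect a b w h),
    ae_restrict_of_ae (convex_unitSq.ae_fderivWithin_eq_fderiv volume f)] with z hz hD
  rw [← hD (hT hz)]
  conv_lhs => rw [hvol, hτ]
  refine (hshape a b w h hw hh hT (hdiam.trans hdδ) z hz).trans ?_
  gcongr

theorem exists_pos_lintegral_shapeK_rpow_le {p : ℝ≥0∞} (hp : 1 ≤ p) (hptop : p ≠ ⊤) {τ : ℝ}
    (hτ : 1 / τ = 1 / p.toReal + 1 / 2) {f : ℝ × ℝ → ℝ} (hf : ContDiffOn ℝ 1 f unitSq)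
    {ε : ℝ} (hε : 0 < ε) :
    ∃ δ > 0, ∀ {M : ℕ} (a b w h : Fin M → ℝ), (∀ i, 0 < w i ∧ 0 < h i) →
      (∀ i i', i ≠ i' → Disjoint (interior (rect (a i) (b i) (w i) (h i)))
        (interior (rect (a i') (b i') (w i') (h i')))) →
      (⋃ i, rect (a i) (b i) (w i) (h i)) = unitSq → ∀ d ≤ δ,
      (∀ i, Metric.diam (rect (a i) (b i) (w i) (h i)) ≤ d) →
      (∫⁻ z in unitSq, shapeK p (fderiv ℝ f z (1, 0)) (fderiv ℝ f z (0, 1)) ^ τ) ^ (1 / τ) ≤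
        (M : ℝ≥0∞) ^ (1 / 2 : ℝ) *
          (globErrP p (fun i => constErr p f (rect (a i) (b i) (w i) (h i))) +
            ENNReal.ofReal (ε * d)) := by
  have hP : 1 ≤ p.toReal := by simpa using ENNReal.toReal_mono hptop hp
  have hτ₀ : 0 < τ := one_div_pos.1 (by rw [hτ]; positivity)
  obtain ⟨δ, hδ, hpiece⟩ := exists_pos_setLIntegral_shapeK_rpow_le hp hptop hτ hf hε
  refine ⟨δ, hδ, fun {M} a b w h hwh hdisj hcover d hdδ hdiam => ?_⟩
  set T := fun i => rect (a i) (b i) (w i) (h i)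
  have hvsum : ∑ i, volume (T i) ≤ 1 :=
    (sum_measure_le_measure_iUnion_of_disjoint_interior volume
      (fun i => convex_rect _ _ _ _) hdisj).trans_eq (by rw [hcover, volume_unitSq])
  calc (∫⁻ z in unitSq, shapeK p (fderiv ℝ f z (1, 0)) (fderiv ℝ f z (0, 1)) ^ τ) ^ (1 / τ)
      ≤ (∑ i, (constErr p f (T i) + volume (T i) ^ (1 / p.toReal) * ENNReal.ofReal (ε * d)) ^ τ)
          ^ (1 / τ) := by
        rw [← hcover]
        gcongr
        refine (lintegral_iUnion_le T _).trans ?_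
        rw [tsum_fintype]
        exact Finset.sum_le_sum fun i _ => hpiece _ _ _ _ (hwh i).1 (hwh i).2
          (hcover ▸ subset_iUnion T i) d hdδ (hdiam i)
    _ ≤ (M : ℝ≥0∞) ^ (1 / 2 : ℝ) *
          ((∑ i, constErr p f (T i) ^ p.toReal) ^ (1 / p.toReal) + ENNReal.ofReal (ε * d)) := by
        simpa using ENNReal.rpow_sum_rpow_add_mul_le Finset.univ _ _ hvsum hP hτ _
    _ = _ := by rw [globErrP, if_neg hptop]

theorem eventually_lintegral_shapeK_rpow_le {p : ℝ≥0∞} (hp : 1 ≤ p) (hptop : p ≠ ⊤) {τ : ℝ}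
    (hτ : 1 / τ = 1 / p.toReal + 1 / 2) (A : ℝ) {f : ℝ × ℝ → ℝ}
    (hf : ContDiffOn ℝ 1 f unitSq) {ε : ℝ} (hε : 0 < ε) :
    ∀ᶠ N : ℕ in atTop,
      (∫⁻ z in unitSq, shapeK p (fderiv ℝ f z (1, 0)) (fderiv ℝ f z (0, 1)) ^ τ) ^ (1 / τ) ≤
        (N : ℝ≥0∞) ^ ((1 : ℝ) / 2) * rectSigmaA p A f N + ENNReal.ofReal (ε * A) := by
  obtain ⟨δ, hδ, hpartition⟩ := exists_pos_lintegral_shapeK_rpow_le hp hptop hτ hf hε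
  have hdiam : Tendsto (fun N : ℕ => A * (N : ℝ) ^ (-(1 : ℝ) / 2)) atTop (𝓝 0) := by
    have h := ((tendsto_rpow_neg_atTop (by norm_num : (0 : ℝ) < 1 / 2)).comp
      tendsto_natCast_atTop_atTop).const_mul A
    rw [mul_zero] at h
    convert h using 3 with N
    norm_num
  filter_upwards [hdiam.eventually (Iic_mem_nhds hδ : Iic δ ∈ 𝓝 0), eventually_ge_atTop 1]
    with N hNδ hN
  have hN₀ : (N : ℝ≥0∞) ≠ 0 := by exact_mod_cast (Nat.one_le_iff_ne_zero.1 hN)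
  have hslack : (N : ℝ≥0∞) ^ ((1 : ℝ) / 2) *
      ENNReal.ofReal (ε * (A * (N : ℝ) ^ (-(1 : ℝ) / 2))) = ENNReal.ofReal (ε * A) := by
    rw [← mul_assoc, ENNReal.ofReal_mul' (by positivity), ← ENNReal.ofReal_rpow_of_pos
      (by positivity), ENNReal.ofReal_natCast, mul_left_comm, ← ENNReal.rpow_add _ _ hN₀
      (ENNReal.natCast_ne_top N)]
    norm_num
  refine ENNReal.le_mul_sInf_add (by positivity) (by simp) ?_
  rintro g ⟨M, -, hMN, a, b, w, h, hwh, hdiamle, hdisj, hcover, rfl⟩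
  calc _ ≤ (M : ℝ≥0∞) ^ (1 / 2 : ℝ) *
        (globErrP p (fun i => constErr p f (rect (a i) (b i) (w i) (h i))) +
          ENNReal.ofReal (ε * (A * (N : ℝ) ^ (-(1 : ℝ) / 2)))) :=
        hpartition a b w h hwh hdisj hcover _ hNδ hdiamle
    _ ≤ (N : ℝ≥0∞) ^ ((1 : ℝ) / 2) *
        (globErrP p (fun i => constErr p f (rect (a i) (b i) (w i) (h i))) +
          ENNReal.ofReal (ε * (A * (N : ℝ) ^ (-(1 : ℝ) / 2)))) := by
        gcongr
    _ = _ := by rw [mul_add, hslack]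

theorem stmt15_general (p : ℝ≥0∞) (hp : 1 ≤ p) (hptop : p ≠ ⊤) (τ : ℝ)
    (hτ : 1 / τ = 1 / p.toReal + 1 / 2) (A : ℝ)
    (f : ℝ × ℝ → ℝ) (hf : ContDiffOn ℝ 1 f unitSq) :
    ENNReal.ofReal ((∫ z in unitSq,
        (shapeK p (fderiv ℝ f z (1, 0)) (fderiv ℝ f z (0, 1))).toReal ^ τ) ^ (1 / τ)) ≤
      Filter.liminf (fun N : ℕ => (N : ℝ≥0∞) ^ ((1:ℝ) / 2) * rectSigmaA p A f N)
        Filter.atTop := by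
  have hτ₀ : 0 < τ := one_div_pos.1 (by rw [hτ]; positivity)
  refine (ofReal_integral_toReal_rpow_rpow_le _ _ hτ₀).trans ?_
  set L := liminf (fun N : ℕ => (N : ℝ≥0∞) ^ ((1:ℝ) / 2) * rectSigmaA p A f N) atTop
  have hslack : ∀ ε > 0,
      (∫⁻ z in unitSq, shapeK p (fderiv ℝ f z (1, 0)) (fderiv ℝ f z (0, 1)) ^ τ) ^ (1 / τ) ≤
        L + ENNReal.ofReal (ε * A) := fun ε hε =>
    tsub_le_iff_right.1 <| le_liminf_of_le (h :=
      (eventually_lintegral_shapeK_rpow_le hp hptop hτ A hf hε).mono fun _ hN =>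
        tsub_le_iff_right.2 hN)
  have hlim : Tendsto (fun ε : ℝ => L + ENNReal.ofReal (ε * A)) (𝓝[>] 0) (𝓝 L) := by
    have h : Continuous fun ε : ℝ => L + ENNReal.ofReal (ε * A) :=
      continuous_const.add (ENNReal.continuous_ofReal.comp (continuous_mul_const A))
    simpa using (h.tendsto 0).mono_left nhdsWithin_le_nhds
  exact ge_of_tendsto hlim (eventually_nhdsWithin_of_forall hslack)

/-- Lower estimate for piecewise constant approximation on adaptive anisotropic
rectangle partitions with diameters at most `A N^{-1/2}`: for `f ∈ C¹([0,1]²)`,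
`p < ∞` and `1/τ = 1/p + 1/2`, `liminf_N N^{1/2} σ_N^A(f)_p ≥ ‖K_p(∇f)‖_{L^τ}`. -/
theorem stmt15 (p : ℝ≥0∞) (hp : 1 ≤ p) (hptop : p ≠ ⊤) (τ : ℝ)
    (hτ : 1 / τ = 1 / p.toReal + 1 / 2) (A : ℝ) (hA : 0 < A)
    (f : ℝ × ℝ → ℝ) (hf : ContDiffOn ℝ 1 f unitSq) :
    ENNReal.ofReal ((∫ z in unitSq,
        (shapeK p (fderiv ℝ f z (1, 0)) (fderiv ℝ f z (0, 1))).toReal ^ τ) ^ (1 / τ)) ≤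
      Filter.liminf (fun N : ℕ => (N : ℝ≥0∞) ^ ((1:ℝ) / 2) * rectSigmaA p A f N)
        Filter.atTop :=
  stmt15_general p hp hptop τ hτ A f hf
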